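/- Let n ≥ 2 and let X be an n-Urysohn homogeneous space. Then |X| ≤ 2^{c(X)·πχ(X)}. -/

import Mathlib

open Cardinal Set

/-- The cellularity of `X`: the supremum of the cardinalities of pairwise
disjoint families of nonempty open sets, taken at least `ℵ₀`. -/
noncomputable def cellularity (X : Type u) [TopologicalSpace X] : Cardinal.{u} :=
  max ℵ₀ (⨆ 𝒰 : {𝒰 : Set (Set X) //
    (∀ U ∈ 𝒰, IsOpen U ∧ U.Nonempty) ∧ 𝒰.PairwiseDisjoint id}, #𝒰.1)

/-- `B` is a local π-base at `x`: a family of nonempty open sets such that every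
open neighbourhood of `x` contains a member of `B`. -/
def IsLocalPiBase {X : Type u} [TopologicalSpace X] (x : X) (B : Set (Set X)) : Prop :=
  (∀ U ∈ B, IsOpen U ∧ U.Nonempty) ∧ ∀ V : Set X, IsOpen V → x ∈ V → ∃ U ∈ B, U ⊆ V

/-- The π-character of `X`: the supremum over `x ∈ X` of the least cardinality
of a local π-base at `x`, taken at least `ℵ₀`. -/
noncomputable def piCharacter (X : Type u) [TopologicalSpace X] : Cardinal.{u} :=
  max ℵ₀ (⨆ x : X, sInf {κ | ∃ B : Set (Set X), IsLocalPiBase x B ∧ #B = κ})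

/-- A space is homogeneous if for all `x, y` some self-homeomorphism maps `x`
to `y`. -/
def Homogeneous (X : Type*) [TopologicalSpace X] : Prop :=
  ∀ x y : X, ∃ h : X ≃ₜ X, h x = y

/-- A space is `n`-Urysohn if any `n` distinct points admit open
neighbourhoods whose closures have empty total intersection. -/
def NUrysohn (n : ℕ) (X : Type*) [TopologicalSpace X] : Prop :=
  ∀ f : Fin n ↪ X, ∃ U : Fin n → Set X,
    (∀ i, IsOpen (U i) ∧ f i ∈ U i) ∧ ⋂ i, closure (U i) = ∅

open Order

/-!
Let `κ = c(X) · πχ(X)`. There is a θ-dense set `D` with `|D| ≤ 2^κ`: otherwise there are points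
`x_t ∈ U_t` (`U_t` open, `t < (2^κ)⁺`) with `x_s ∉ cl U_t` for `s < t`. Colour a pair `s < t` by the
index of a local π-base element at `x_s` inside `U_s` and disjoint from `U_t`; by Erdős–Rado a
homogeneous set of size `κ⁺` exists, and its π-base elements form a cellular family of size `κ⁺`.

Fix `p`, a local π-base `B` at `p` with `|B| ≤ πχ(X)`, and homeomorphisms `h_x` with `h_x p = x`.
Map `x` to a choice of points of `D` in `cl (h_x U)`, `U ∈ B`. If `n` distinct points had the same
image, the pullbacks of their `n`-Urysohn neighbourhoods `V_i` would contain some `U ∈ B` around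
`p`, and the common chosen point for `U` would lie in every `cl V_i`. So the map is less than
`n`-to-one and `|X| ≤ |D|^|B| · n ≤ 2^κ`.
-/

universe u

namespace ErdosRado

variable {T ι Θ : Type u} [LinearOrder Θ] [WellFoundedLT Θ]

/-- The points that may extend the branch `f` of `b` at stage `ξ`: new points coloured against
each earlier point of the branch as `b` is. -/
def candidates (C : T → T → ι) (b : T) (ξ : Θ) (f : ∀ η < ξ, T) : Set T :=
  {a | ∀ η (hη : η < ξ), a ≠ f η hη ∧ C (f η hη) a = C (f η hη) b}

noncomputable def branch [Nonempty T] (C : T → T → ι) (b : T) : Θ → T :=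
  wellFounded_lt.fix fun ξ f => Classical.epsilon (· ∈ candidates C b ξ f)

variable [Nonempty T] (C : T → T → ι)

theorem branch_eq (b : T) (ξ : Θ) :
    branch C b ξ = Classical.epsilon (· ∈ candidates C b ξ fun η _ => branch C b η) :=
  wellFounded_lt.fix_eq _ ξ

theorem branch_mem_candidates {b : T} {ξ : Θ} (h : ∀ η < ξ, branch C b η ≠ b) :
    branch C b ξ ∈ candidates C b ξ fun η _ => branch C b η := by
  rw [branch_eq C b ξ]
  exact Classical.epsilon_spec ⟨b, fun η hη => ⟨(h η hη).symm, rfl⟩⟩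

theorem branch_eq_of_colors_eq {b b' : T} {ξ : Θ}
    (h : ∀ η < ξ, C (branch C b η) b = C (branch C b' η) b') :
    branch C b ξ = branch C b' ξ := by
  induction ξ using WellFoundedLT.induction with
  | ind ξ IH =>
    suffices hc : (candidates C b ξ fun η _ => branch C b η) =
        candidates C b' ξ fun η _ => branch C b' η by
      rw [branch_eq C b, branch_eq C b', hc]
    ext a
    refine forall₂_congr fun η hη => ?_
    dsimp only
    rw [h η hη, IH η hη fun η' hη' => h η' (hη'.trans hη)]

theorem mk_le_of_forall_exists_branch_eq (hret : ∀ b : T, ∃ ξ : Θ, branch C b ξ = b)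
    {c : Cardinal.{u}} (hc : ∀ ξ : Θ, #(Iio ξ → ι) ≤ c) : #T ≤ #Θ * c := by
  choose σ hσ using hret
  refine mk_le_mk_mul_of_mk_preimage_le σ fun ξ => (hc ξ).trans' <|
    mk_le_of_injective (f := fun b : σ ⁻¹' {ξ} => fun η : Iio ξ => C (branch C b η.1) b) ?_
  rintro ⟨b, rfl : σ b = ξ⟩ ⟨b', hb' : σ b' = σ b⟩ h
  ext
  calc b = branch C b (σ b) := (hσ b).symm
    _ = branch C b' (σ b) := branch_eq_of_colors_eq C fun η hη => congrFun h ⟨η, hη⟩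
    _ = b' := hb' ▸ hσ b'

theorem exists_pairwise_eq_of_branch_ne {κ : Cardinal.{u}} (hκ : ℵ₀ ≤ κ) (hΘ : succ κ ≤ #Θ)
    (hι : #ι ≤ κ) (hC : ∀ a a', C a a' = C a' a) {b : T} (hb : ∀ ξ : Θ, branch C b ξ ≠ b) :
    ∃ S : Set T, ∃ c, succ κ ≤ #S ∧ S.Pairwise fun a a' => C a a' = c := by
  set x : Θ → T := branch C b
  have hx : ∀ η ξ, η < ξ → x ξ ≠ x η ∧ C (x η) (x ξ) = C (x η) b := fun η ξ h =>
    branch_mem_candidates C (fun η _ => hb η) η h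
  have hinj : Function.Injective x := by
    intro ξ η h
    by_contra hne
    rcases lt_or_gt_of_ne hne with h' | h'
    exacts [(hx _ _ h').1 h.symm, (hx _ _ h').1 h]
  obtain ⟨c, hc⟩ := infinite_pigeonhole_card (fun ξ => C (x ξ) b) (succ κ) hΘ
    (hκ.trans (le_succ κ)) (by rw [(isRegular_succ hκ).cof_ord]; exact hι.trans_lt (lt_succ κ))
  refine ⟨x '' ((fun ξ => C (x ξ) b) ⁻¹' {c}), c, by rwa [mk_image_eq hinj], ?_⟩
  rintro _ ⟨ξ, hξ, rfl⟩ _ ⟨η, hη, rfl⟩ hne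
  rcases lt_or_gt_of_ne (hinj.ne_iff.mp hne) with h | h
  · exact (hx ξ η h).2.trans hξ
  · exact (hC _ _).trans ((hx η ξ h).2.trans hη)

end ErdosRado

theorem power_le_two_power {a b κ : Cardinal} (ha : a ≤ 2 ^ κ) (hb : b ≤ κ) (hκ : ℵ₀ ≤ κ) :
    a ^ b ≤ 2 ^ κ :=
  calc a ^ b ≤ (2 ^ κ) ^ κ :=
        (power_le_power_right ha).trans (power_le_power_left (power_ne_zero _ two_ne_zero) hb)
    _ = 2 ^ κ := by rw [← power_mul, mul_eq_self hκ]

open ErdosRado in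
/-- Either some branch never returns to its root during `κ⁺` steps, and is then end-homogeneous,
so pigeonhole on the colours against the root gives `S`; or every root reappears on its branch,
and the colours along the branch up to that point determine the root, so `|T| ≤ κ⁺ · κ^κ`. -/
theorem erdos_rado {T ι : Type u} {κ : Cardinal.{u}} (hκ : ℵ₀ ≤ κ) (hι : #ι ≤ κ)
    (hT : 2 ^ κ < #T) (C : T → T → ι) (hC : ∀ a a', C a a' = C a' a) :
    ∃ S : Set T, ∃ c, succ κ ≤ #S ∧ S.Pairwise fun a a' => C a a' = c := by
  have : Nonempty T := mk_ne_zero_iff.mp hT.pos.ne'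
  let Θ := (succ κ).ord.ToType
  have hΘ : #Θ = succ κ := by simp [Θ]
  by_cases h : ∃ b : T, ∀ ξ : Θ, branch C b ξ ≠ b
  · obtain ⟨b, hb⟩ := h
    exact exists_pairwise_eq_of_branch_ne C hκ hΘ.ge hι hC hb
  push Not at h
  refine absurd hT (not_lt.mpr ?_)
  calc #T ≤ #Θ * 2 ^ κ := mk_le_of_forall_exists_branch_eq C h fun ξ => by
        rw [← power_def]
        refine power_le_two_power (hι.trans (cantor κ).le) (lt_succ_iff.mp ?_) hκ
        simpa [hΘ] using mk_Iio_lt ξ (by simp [Θ])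
    _ ≤ 2 ^ κ * 2 ^ κ := by rw [hΘ]; exact mul_le_mul_left (succ_le_of_lt (cantor κ)) _
    _ = 2 ^ κ := mul_eq_self (hκ.trans (cantor κ).le)

section Topology

variable {X : Type u} [TopologicalSpace X]

/-- `D` is θ-dense, i.e. its θ-closure `{x | ∀ V open ∋ x, (closure V ∩ D).Nonempty}` is all
of `X`. -/
def IsThetaDense (D : Set X) : Prop :=
  ∀ U : Set X, IsOpen U → U.Nonempty → (closure U ∩ D).Nonempty

theorem aleph0_le_cellularity : ℵ₀ ≤ cellularity X := le_max_left _ _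

theorem aleph0_le_piCharacter : ℵ₀ ≤ piCharacter X := le_max_left _ _

theorem mk_le_cellularity_of_pairwiseDisjoint {α : Type u} {S : Set α} {f : α → Set X}
    (hf : ∀ s ∈ S, IsOpen (f s) ∧ (f s).Nonempty) (hd : S.PairwiseDisjoint f) :
    #S ≤ cellularity X := by
  have hinj : InjOn f S := fun s hs t ht hst =>
    hd.elim_set hs ht _ (hf s hs).2.some_mem (hst ▸ (hf s hs).2.some_mem)
  rw [← mk_image_eq_of_injOn f S hinj, cellularity]
  refine le_max_of_le_right ?_
  refine le_ciSup bddAbove_of_small (⟨f '' S, ?_, ?_⟩ : {𝒰 : Set (Set X) // _})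
  · rintro _ ⟨s, hs, rfl⟩
    exact hf s hs
  · rintro _ ⟨s, hs, rfl⟩ _ ⟨t, ht, rfl⟩ hne
    exact hd hs ht (ne_of_apply_ne f hne)

theorem exists_isLocalPiBase_mk_le (x : X) :
    ∃ B : Set (Set X), IsLocalPiBase x B ∧ #B ≤ piCharacter X := by
  have hne : {κ | ∃ B : Set (Set X), IsLocalPiBase x B ∧ #B = κ}.Nonempty :=
    ⟨_, {U | IsOpen U ∧ U.Nonempty}, ⟨fun _ hU => hU, fun V hV hxV => ⟨V, ⟨hV, x, hxV⟩, le_rfl⟩⟩,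
      rfl⟩
  obtain ⟨B, hB, hBκ⟩ := csInf_mem hne
  exact ⟨B, hB, hBκ ▸ le_max_of_le_right (le_ciSup bddAbove_of_small x)⟩

theorem exists_isLocalPiBase_range {ι : Type u} [Nonempty ι] (hι : piCharacter X ≤ #ι) (x : X) :
    ∃ e : ι → Set X, IsLocalPiBase x (range e) := by
  obtain ⟨B, hB, hBπ⟩ := exists_isLocalPiBase_mk_le x
  obtain ⟨U, hU, -⟩ := hB.2 univ isOpen_univ (mem_univ x)
  have : Nonempty B := ⟨⟨U, hU⟩⟩
  obtain ⟨g⟩ := hBπ.trans hι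
  refine ⟨fun i => (Function.invFun g i : B), forall_mem_range.2 fun i => hB.1 _ (Subtype.mem _),
    fun V hV hxV => ?_⟩
  obtain ⟨W, hWB, hWV⟩ := hB.2 V hV hxV
  exact ⟨W, ⟨g ⟨W, hWB⟩, by simp [Function.leftInverse_invFun g.injective _]⟩, hWV⟩

theorem exists_separated_seq {T : Type u} [LinearOrder T] [WellFoundedLT T] {c : Cardinal.{u}}
    (hT : ∀ t : T, #(Iio t) ≤ c) (h : ∀ D : Set X, #D ≤ c → ¬IsThetaDense D) :
    ∃ (x : T → X) (U : T → Set X), (∀ t, IsOpen (U t) ∧ x t ∈ U t) ∧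
      ∀ s t, s < t → x s ∉ closure (U t) := by
  have hstep : ∀ (t : T) (f : ∀ s < t, X), ∃ p : X × Set X, IsOpen p.2 ∧ p.1 ∈ p.2 ∧
      Disjoint (closure p.2) (range fun s : Iio t => f s.1 s.2) := by
    intro t f
    have := h (range fun s : Iio t => f s.1 s.2) (mk_range_le.trans (hT t))
    simp only [IsThetaDense, not_forall, not_nonempty_iff_eq_empty] at this
    obtain ⟨U, hU, ⟨z, hz⟩, hUD⟩ := this
    exact ⟨(z, U), hU, hz, disjoint_iff_inter_eq_empty.mpr hUD⟩
  choose p hp using hstep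
  let x : T → X := wellFounded_lt.fix fun t f => (p t f).1
  have hx : ∀ t, x t = (p t fun s _ => x s).1 := fun t => wellFounded_lt.fix_eq _ t
  refine ⟨x, fun t => (p t fun s _ => x s).2, fun t => ⟨(hp _ _).1, hx t ▸ (hp _ _).2.1⟩,
    fun s t hst hs => (hp t _).2.2.ne_of_mem hs ⟨⟨s, hst⟩, rfl⟩ rfl⟩

theorem succ_le_mk_setOf_exists_gt {α : Type u} [LinearOrder α] {κ : Cardinal.{u}} (hκ : ℵ₀ ≤ κ)
    {S : Set α} (hS : succ κ ≤ #S) : succ κ ≤ #{s ∈ S | ∃ t ∈ S, s < t} := by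
  by_contra! h
  have hmax : (S \ {s ∈ S | ∃ t ∈ S, s < t}).Subsingleton := by
    rintro a ⟨ha, ha'⟩ b ⟨hb, hb'⟩
    by_contra hab
    rcases lt_or_gt_of_ne hab with h' | h'
    exacts [ha' ⟨ha, b, hb, h'⟩, hb' ⟨hb, a, ha, h'⟩]
  refine hS.not_gt (lt_succ_iff.mpr ?_)
  calc #S = #(S \ {s ∈ S | ∃ t ∈ S, s < t} : Set α) + #{s ∈ S | ∃ t ∈ S, s < t} :=
        (mk_sdiff_add_mk (sep_subset _ _)).symm
    _ ≤ κ + κ := add_le_add ((mk_le_one_iff_set_subsingleton.mpr hmax).trans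
        (one_le_aleph0.trans hκ)) (lt_succ_iff.mp h)
    _ = κ := add_eq_self hκ

theorem lt_cellularity_of_separated_seq {T ι : Type u} [LinearOrder T] {κ : Cardinal.{u}}
    (hκ : ℵ₀ ≤ κ) (hι : #ι ≤ κ) (hT : 2 ^ κ < #T) {e : X → ι → Set X}
    (he : ∀ x, IsLocalPiBase x (range (e x))) {x : T → X} {U : T → Set X}
    (hU : ∀ t, IsOpen (U t) ∧ x t ∈ U t) (hsep : ∀ s t, s < t → x s ∉ closure (U t)) :
    κ < cellularity X := by
  have hcol : ∀ s t, s < t → ∃ i, e (x s) i ⊆ U s ∧ Disjoint (e (x s) i) (U t) := by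
    intro s t hst
    obtain ⟨_, ⟨i, rfl⟩, hi⟩ := (he (x s)).2 ((closure (U t))ᶜ ∩ U s)
      (isClosed_closure.isOpen_compl.inter (hU s).1) ⟨hsep s t hst, (hU s).2⟩
    exact ⟨i, hi.trans inter_subset_right,
      (disjoint_compl_left.mono_right subset_closure).mono_left (hi.trans inter_subset_left)⟩
  have : Nonempty ι := by
    obtain ⟨t⟩ := mk_ne_zero_iff.mp hT.pos.ne'
    obtain ⟨_, ⟨i, -⟩, -⟩ := (he (x t)).2 univ isOpen_univ trivial
    exact ⟨i⟩
  choose! i hi using hcol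
  obtain ⟨S, c, hS, hSc⟩ := erdos_rado hκ hι hT (fun s t => i (min s t) (max s t))
    fun s t => by rw [min_comm, max_comm]
  have hSlt : ∀ s ∈ S, ∀ t ∈ S, s < t → i s t = c := fun s hs t ht hst => by
    simpa [min_eq_left hst.le, max_eq_right hst.le] using hSc hs ht hst.ne
  set S₁ := {s ∈ S | ∃ t ∈ S, s < t}
  have hsub : ∀ t ∈ S₁, e (x t) c ⊆ U t := by
    rintro t ⟨ht, t', ht', htt'⟩
    exact hSlt t ht t' ht' htt' ▸ (hi t t' htt').1
  have hdisj : ∀ s ∈ S₁, ∀ t ∈ S₁, s < t → Disjoint (e (x s) c) (e (x t) c) :=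
    fun s hs t ht hst => (hSlt s hs.1 t ht.1 hst ▸ (hi s t hst).2).mono_right (hsub t ht)
  refine (lt_succ κ).trans_le ((succ_le_mk_setOf_exists_gt hκ hS).trans
    (mk_le_cellularity_of_pairwiseDisjoint (f := fun s => e (x s) c)
      (fun s _ => (he (x s)).1 _ (mem_range_self c)) ?_))
  exact fun s hs t ht hst =>
    (lt_or_gt_of_ne hst).elim (hdisj s hs t ht) fun h => (hdisj t ht s hs h).symm

theorem exists_isThetaDense_mk_le {κ : Cardinal.{u}} (hκ : ℵ₀ ≤ κ) (hc : cellularity X ≤ κ)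
    (hπ : piCharacter X ≤ κ) : ∃ D : Set X, IsThetaDense D ∧ #D ≤ 2 ^ κ := by
  by_contra! h
  let T := (succ ((2 : Cardinal.{u}) ^ κ)).ord.ToType
  obtain ⟨x, U, hU, hsep⟩ := exists_separated_seq (T := T) (c := 2 ^ κ)
    (fun t => lt_succ_iff.mp ((mk_Iio_lt t (by simp [T])).trans_eq (by simp [T])))
    fun D hD hθ => (h D hθ).not_ge hD
  have : Nonempty κ.out := mk_ne_zero_iff.mp (by rw [mk_out]; exact (aleph0_pos.trans_le hκ).ne')
  choose e he using exists_isLocalPiBase_range (X := X) (mk_out κ ▸ hπ)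
  exact (lt_cellularity_of_separated_seq hκ (mk_out κ).le (by simp [T]) he hU hsep).not_ge hc

theorem NUrysohn.mk_preimage_lt {n : ℕ} (hX : NUrysohn n X) {p : X} {B : Set (Set X)}
    (hB : IsLocalPiBase p B) {h : X → X ≃ₜ X} (hp : ∀ x, h x p = x) {D : Set X}
    {G : X → B → D} (hG : ∀ x (U : B), (G x U : X) ∈ closure (h x '' U)) (g : B → D) :
    #(G ⁻¹' {g}) < n := by
  by_contra! hle
  obtain ⟨f⟩ : Nonempty (Fin n ↪ G ⁻¹' {g}) := by
    rwa [← lift_mk_le', mk_fin, lift_natCast, lift_uzero]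
  obtain ⟨V, hV, hVempty⟩ := hX (f.trans (Function.Embedding.subtype _))
  obtain ⟨W, hWB, hW⟩ := hB.2 (⋂ i, h (f i) ⁻¹' V i)
    (isOpen_iInter_of_finite fun i => (hV i).1.preimage (h _).continuous)
    (mem_iInter.2 fun i => by simpa [hp] using (hV i).2)
  have hgW : ∀ i, (g ⟨W, hWB⟩ : X) ∈ closure (V i) := fun i => by
    have hfi : G (f i) = g := (f i).2
    have hGW := hG (f i) ⟨W, hWB⟩
    rw [hfi] at hGW
    exact closure_mono (image_subset_iff.2 (hW.trans (iInter_subset _ i))) hGW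
  simpa [hVempty] using mem_iInter.2 hgW

theorem Homogeneous.mk_le_of_nUrysohn {n : ℕ} (hhom : Homogeneous X) (hX : NUrysohn n X)
    {D : Set X} (hD : IsThetaDense D) {p : X} {B : Set (Set X)} (hB : IsLocalPiBase p B) :
    #X ≤ #(B → D) * n := by
  choose h hp using hhom p
  have hmeet : ∀ x (U : B), (closure (h x '' U) ∩ D).Nonempty := fun x U =>
    hD _ ((h x).isOpen_image.2 (hB.1 U U.2).1) ((hB.1 U U.2).2.image _)
  choose G hG using hmeet
  exact mk_le_mk_mul_of_mk_preimage_le (fun x U => (⟨G x U, (hG x U).2⟩ : D))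
    fun g => (hX.mk_preimage_lt hB hp (fun x (U : B) => (hG x U).1) g).le

end Topology

theorem stmt13_general (n : ℕ) (X : Type u) [TopologicalSpace X]
    (hX : NUrysohn n X) (hhom : Homogeneous X) :
    #X ≤ 2 ^ (cellularity X * piCharacter X) := by
  rcases isEmpty_or_nonempty X with _ | ⟨⟨p⟩⟩
  · simp
  set κ := cellularity X * piCharacter X
  have hcκ : cellularity X ≤ κ := le_mul_right (aleph0_pos.trans_le aleph0_le_piCharacter).ne'
  have hπκ : piCharacter X ≤ κ := le_mul_left (aleph0_pos.trans_le aleph0_le_cellularity).ne'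
  have hκ : ℵ₀ ≤ κ := aleph0_le_cellularity.trans hcκ
  obtain ⟨D, hD, hDκ⟩ := exists_isThetaDense_mk_le hκ hcκ hπκ
  obtain ⟨B, hB, hBπ⟩ := exists_isLocalPiBase_mk_le p
  calc #X ≤ #(B → D) * n := hhom.mk_le_of_nUrysohn hX hD hB
    _ ≤ 2 ^ κ * 2 ^ κ := by
      rw [← power_def]
      exact mul_le_mul' (power_le_two_power hDκ (hBπ.trans hπκ) hκ)
        (natCast_lt_aleph0.le.trans (hκ.trans (cantor κ).le))
    _ = 2 ^ κ := mul_eq_self (hκ.trans (cantor κ).le)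

theorem stmt13 (n : ℕ) (hn : 2 ≤ n) (X : Type u) [TopologicalSpace X]
    (hX : NUrysohn n X) (hhom : Homogeneous X) :
    #X ≤ 2 ^ (cellularity X * piCharacter X) :=
  stmt13_general n X hX hhom
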